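/- arXiv:1112.1444 — 10 statements merged into one kernel-verified Lean document; each statement's English description precedes it below -/
import Mathlib

section
/- Let H be a directed hypergraph. Every terminal strongly connected component of the directed graph graph(H) that is reduced to a singleton is also a terminal strongly connected component of H. -/
/-- Reachability in a directed hypergraph whose hyperarc set is `A`. -/
inductive HReach {V : Type*} (A : Set (Set V × Set V)) : V → V → Prop
  | refl (u : V) : HReach A u u
  | step {u v : V} (T Hd : Set V) (ha : (T, Hd) ∈ A) (hv : v ∈ Hd)
      (hT : ∀ t ∈ T, HReach A u t) : HReach A u v

/-- Arcs of the directed graph `graph(H)` generated by simple hyperarcs. -/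
def graphArcs {V : Type*} (A : Set (Set V × Set V)) : Set (V × V) :=
  {p | ∃ Hd : Set V, ({p.1}, Hd) ∈ A ∧ p.2 ∈ Hd}

/-- Reachability in the directed graph `graph(H)`. -/
def GReach {V : Type*} (A : Set (Set V × Set V)) : V → V → Prop :=
  Relation.ReflTransGen (fun u v => (u, v) ∈ graphArcs A)

/-- `C` is a strongly connected component of the relation `R`. -/
def IsSCC {V : Type*} (R : V → V → Prop) (C : Set V) : Prop :=
  ∃ u : V, C = {v | R u v ∧ R v u}

/-- `C` is a terminal strongly connected component of `R`. -/
def IsTerminalSCC {V : Type*} (R : V → V → Prop) (C : Set V) : Prop :=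
  IsSCC R C ∧ ∀ u ∈ C, ∀ v, R u v → v ∈ C

theorem singleton_terminal_scc_of_graph {V : Type*} (A : Set (Set V × Set V))
    (hA : ∀ p ∈ A, p.1.Nonempty ∧ p.2.Nonempty) (u : V)
    (h : IsTerminalSCC (GReach A) {u}) :
    IsTerminalSCC (HReach A) {u} := by
  obtain ⟨-, hterm⟩ := h
  have key : ∀ v, HReach A u v → v = u := by
    intro v hv
    induction hv with
    | refl => rfl
    | step T Hd ha hv hT ih =>
      have hTu : T = {u} := by
        apply Set.eq_singleton_iff_nonempty_unique_mem.mpr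
        exact ⟨(hA _ ha).1, fun t ht => ih t ht⟩
      subst hTu
      have : GReach A u _ := Relation.ReflTransGen.single ⟨Hd, ha, hv⟩
      exact hterm u rfl _ this
  constructor
  · refine ⟨u, ?_⟩
    ext v
    simp only [Set.mem_singleton_iff, Set.mem_setOf_eq]
    exact ⟨fun hv => by subst hv; exact ⟨HReach.refl v, HReach.refl v⟩, fun ⟨h1, _⟩ => key v h1⟩
  · rintro w rfl v hv
    exact key v hv
end

section
/- Let H be a directed hypergraph. If all terminal strongly connected components of the directed graph graph(H) are singletons, then H and graph(H) have exactly the same terminal strongly connected components. -/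
section Aux

variable {V : Type*} {A : Set (Set V × Set V)}

lemma greach_hreach {u v : V} (h : GReach A u v) : HReach A u v := by
  induction h with
  | refl => exact HReach.refl u
  | tail hab hbc ih =>
    obtain ⟨Hd, hm, hv⟩ := hbc
    exact HReach.step _ Hd hm hv (by rintro t ht; rw [Set.mem_singleton_iff] at ht; subst ht; exact ih)

lemma hreach_sink (hA : ∀ p ∈ A, p.1.Nonempty ∧ p.2.Nonempty) {w : V}
    (hw : ∀ v, GReach A w v → v = w) {v : V} (h : HReach A w v) : v = w := by
  induction h with
  | refl => rfl
  | step T Hd ha hv hT ih =>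
    have hTw : T = {w} :=
      Set.eq_singleton_iff_nonempty_unique_mem.mpr ⟨(hA _ ha).1, fun t ht => ih t ht⟩
    apply hw
    exact Relation.ReflTransGen.single ⟨Hd, by rwa [hTw] at ha, hv⟩

lemma sink_exists [Finite V] (u : V) :
    ∃ w : V, GReach A u w ∧ ∀ v, GReach A w v → GReach A v w := by
  have key : ∀ n (u : V), ({x | GReach A u x}).ncard ≤ n →
      ∃ w : V, GReach A u w ∧ ∀ v, GReach A w v → GReach A v w := by
    intro n
    induction n with
    | zero =>
      intro u hu
      exfalso
      have : ({x | GReach A u x}).ncard = 0 := Nat.le_zero.mp hu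
      have hne : ({x | GReach A u x}).Nonempty := ⟨u, Relation.ReflTransGen.refl⟩
      rw [Set.ncard_eq_zero (Set.toFinite _)] at this
      exact hne.ne_empty this
    | succ n ih =>
      intro u hu
      by_cases hcase : ∀ v, GReach A u v → GReach A v u
      · exact ⟨u, Relation.ReflTransGen.refl, hcase⟩
      · push_neg at hcase
        obtain ⟨v, huv, hnvu⟩ := hcase
        have hsub : {x | GReach A v x} ⊂ {x | GReach A u x} := by
          constructor
          · intro x hx; exact huv.trans hx
          · intro hsup
            exact hnvu (hsup (Relation.ReflTransGen.refl))
        have hlt : ({x | GReach A v x}).ncard < ({x | GReach A u x}).ncard :=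
          Set.ncard_lt_ncard hsub (Set.toFinite _)
        obtain ⟨w, hvw, hsink⟩ := ih v (by omega)
        exact ⟨w, huv.trans hvw, hsink⟩
  exact key _ u le_rfl

end Aux

theorem terminal_sccs_eq_of_all_singleton {V : Type*} [Finite V]
    (A : Set (Set V × Set V))
    (hA : ∀ p ∈ A, p.1.Nonempty ∧ p.2.Nonempty)
    (hsingle : ∀ C : Set V, IsTerminalSCC (GReach A) C → ∃ u : V, C = {u}) :
    ∀ C : Set V, IsTerminalSCC (HReach A) C ↔ IsTerminalSCC (GReach A) C := by
  -- From a "quasi-sink" w (every successor reaches back), get a true sink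
  have sink_of_qsink : ∀ w : V, (∀ v, GReach A w v → GReach A v w) →
      (∀ v, GReach A w v → v = w) := by
    intro w hq
    have hterm : IsTerminalSCC (GReach A) {v | GReach A w v ∧ GReach A v w} := by
      refine ⟨⟨w, rfl⟩, ?_⟩
      rintro x ⟨hwx, hxw⟩ v hxv
      have hwv : GReach A w v := hwx.trans hxv
      exact ⟨hwv, hq v hwv⟩
    obtain ⟨u, hu⟩ := hsingle _ hterm
    have hwmem : w ∈ ({u} : Set V) := by
      rw [← hu]; exact ⟨Relation.ReflTransGen.refl, Relation.ReflTransGen.refl⟩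
    rw [Set.mem_singleton_iff] at hwmem
    subst hwmem
    intro v hwv
    have : v ∈ ({w} : Set V) := by rw [← hu]; exact ⟨hwv, hq v hwv⟩
    rwa [Set.mem_singleton_iff] at this
  intro C
  constructor
  · rintro ⟨⟨u, rfl⟩, hterm⟩
    have humem : u ∈ {v | HReach A u v ∧ HReach A v u} := ⟨HReach.refl u, HReach.refl u⟩
    obtain ⟨w, huw, hq⟩ := sink_exists (A := A) u
    have hwsink : ∀ v, GReach A w v → v = w := sink_of_qsink w hq
    have hwmem : w ∈ {v | HReach A u v ∧ HReach A v u} :=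
      hterm u humem w (greach_hreach huw)
    have huw' : u = w := hreach_sink hA hwsink hwmem.2
    subst huw'
    -- now u is a GReach-sink; C = {u}
    have hC : {v | HReach A u v ∧ HReach A v u} = {v | GReach A u v ∧ GReach A v u} := by
      ext v
      simp only [Set.mem_setOf_eq]
      constructor
      · rintro ⟨h1, h2⟩
        have := hreach_sink hA hwsink h1
        subst this
        exact ⟨Relation.ReflTransGen.refl, Relation.ReflTransGen.refl⟩
      · rintro ⟨h1, h2⟩
        exact ⟨greach_hreach h1, greach_hreach h2⟩
    rw [hC]
    refine ⟨⟨u, rfl⟩, ?_⟩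
    rintro x ⟨hux, hxu⟩ v hxv
    have hx : x = u := hwsink x hux
    subst hx
    have hv : v = x := hwsink v hxv
    subst hv
    exact ⟨hux, hxu⟩
  · rintro hT
    obtain ⟨u, hu⟩ := hsingle _ hT
    obtain ⟨⟨u', hu'⟩, hterm⟩ := hT
    have humem : u ∈ ({u} : Set V) := rfl
    rw [← hu] at humem
    have husink : ∀ v, GReach A u v → v = u := by
      intro v hv
      have := hterm u humem v hv
      rw [hu] at this
      exact this
    constructor
    · refine ⟨u, ?_⟩
      rw [hu]
      ext v
      simp only [Set.mem_singleton_iff, Set.mem_setOf_eq]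
      constructor
      · rintro rfl; exact ⟨HReach.refl _, HReach.refl _⟩
      · rintro ⟨h1, h2⟩; exact hreach_sink hA husink h1
    · intro x hx v hxv
      rw [hu] at hx
      rw [Set.mem_singleton_iff] at hx
      subst hx
      have := hreach_sink hA husink hxv
      subst this
      exact humem
end

section
/- Let H = (V, A) be a directed hypergraph and x, y ∈ V two vertices in the same strongly connected component (x ⇝ y and y ⇝ x). Let f map every vertex distinct from x and y to itself, and map both x and y to a fresh vertex z ∉ V. Then for all u, v ∈ V: u ⇝_H v if and only if f(u) ⇝_{f(H)} f(v), where f(H) is the image hypergraph with vertices f(w) and hyperarcs (f(T), f(H')) for each hyperarc (T, H') of H. -/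
theorem reach_iff_reach_of_merge {V W : Type*} (A : Set (Set V × Set V))
    (hA : ∀ p ∈ A, p.1.Nonempty ∧ p.2.Nonempty)
    (x y : V) (hxy : HReach A x y ∧ HReach A y x)
    (f : V → W) (z : W)
    (hfx : f x = z) (hfy : f y = z)
    (hfz : ∀ w : V, w ≠ x → w ≠ y → f w ≠ z)
    (hinj : ∀ w w' : V, w ≠ x → w ≠ y → w' ≠ x → w' ≠ y → f w = f w' → w = w') :
    ∀ u v : V, HReach A u v ↔
      HReach ((fun p : Set V × Set V => (f '' p.1, f '' p.2)) '' A) (f u) (f v) := by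
  set A' := (fun p : Set V × Set V => (f '' p.1, f '' p.2)) '' A with hA'
  -- transitivity of HReach
  have htrans : ∀ {a b c : V}, HReach A a b → HReach A b c → HReach A a c := by
    intro a b c hab hbc
    induction hbc with
    | refl => exact hab
    | step T Hd ha hv hT ih => exact HReach.step T Hd ha hv ih
  -- equal images imply mutual reachability
  have hsame : ∀ w w' : V, f w = f w' → HReach A w w' := by
    intro w w' h
    by_cases hw : w = x ∨ w = y
    · have hwz : f w = z := by rcases hw with h1 | h1 <;> simp [h1, hfx, hfy]
      have hw'z : f w' = z := h ▸ hwz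
      have hw' : w' = x ∨ w' = y := by
        by_contra hc
        push_neg at hc
        exact hfz w' hc.1 hc.2 hw'z
      rcases hw with rfl | rfl <;> rcases hw' with rfl | rfl
      · exact HReach.refl _
      · exact hxy.1
      · exact hxy.2
      · exact HReach.refl _
    · push_neg at hw
      have hw' : w' ≠ x ∧ w' ≠ y := by
        constructor <;> rintro rfl
        · exact hfz w hw.1 hw.2 (h.trans hfx)
        · exact hfz w hw.1 hw.2 (h.trans hfy)
      have := hinj w w' hw.1 hw.2 hw'.1 hw'.2 h
      exact this ▸ HReach.refl _
  intro u v
  constructor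
  · intro h
    induction h with
    | refl => exact HReach.refl _
    | step T Hd ha hv hT ih =>
      refine HReach.step (f '' T) (f '' Hd) ⟨(T, Hd), ha, rfl⟩ ⟨_, hv, rfl⟩ ?_
      rintro t' ⟨t, ht, rfl⟩
      exact ih t ht
  · intro h
    -- key: anything reachable from f u in A' whose preimage is w gives HReach A u w
    have key : ∀ w' : W, HReach A' (f u) w' → ∀ w : V, f w = w' → HReach A u w := by
      intro w' h
      induction h with
      | refl =>
        intro w hw
        exact hsame u w hw.symm
      | step T' Hd' ha' hv' hT' ih =>
        rcases ha' with ⟨⟨T, Hd⟩, ha, heq⟩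
        simp only [Prod.mk.injEq] at heq
        obtain ⟨hT, hHd⟩ := heq
        subst hT; subst hHd
        rcases hv' with ⟨hd, hhd, rfl⟩
        intro w hw
        have hreach_hd : HReach A u hd := by
          refine HReach.step T Hd ha hhd ?_
          intro t ht
          exact ih (f t) ⟨t, ht, rfl⟩ t rfl
        exact htrans hreach_hd (hsame hd w hw.symm)
    exact key (f v) h v rfl
end

section
/- Let F be a Horn formula over variables X_1, ..., X_n and H(F) the associated directed hypergraph. Then F entails the implication X_i ⇒ X_j if and only if vertex j is reachable from vertex i in H(F). -/
/-- A Horn clause over variables `X_1, ..., X_n`. -/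
inductive HornClause (n : ℕ) : Type
  | imp (T : Finset (Fin n)) (hT : T.Nonempty) (i : Fin n) : HornClause n
  | fact (i : Fin n) : HornClause n
  | goal (T : Finset (Fin n)) (hT : T.Nonempty) : HornClause n

/-- Truth value of a Horn clause under an assignment. -/
def HornClause.eval {n : ℕ} (σ : Fin n → Prop) : HornClause n → Prop
  | .imp T _ i => (∀ j ∈ T, σ j) → σ i
  | .fact i => σ i
  | .goal T _ => ∃ j ∈ T, ¬ σ j

/-- Variable `i` occurs in a Horn clause. -/
def HornClause.occurs {n : ℕ} (i : Fin n) : HornClause n → Prop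
  | .imp T _ j => i ∈ T ∨ i = j
  | .fact j => i = j
  | .goal T _ => i ∈ T

/-- The directed hypergraph `H(F)` associated to a Horn formula `F`.
Vertices: `Sum.inl i` is the variable vertex `i`, `Sum.inr true` is the
vertex `t`, `Sum.inr false` is the vertex `f`. -/
def hornArcs {n : ℕ} (F : Set (HornClause n)) :
    Set (Set (Fin n ⊕ Bool) × Set (Fin n ⊕ Bool)) :=
  {p | (∃ T hT i, HornClause.imp T hT i ∈ F ∧
          p = (Sum.inl '' (T : Set (Fin n)), {Sum.inl i}))
    ∨ (∃ i, HornClause.fact i ∈ F ∧ p = ({Sum.inr true}, {Sum.inl i}))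
    ∨ (∃ T hT, HornClause.goal T hT ∈ F ∧
          p = (Sum.inl '' (T : Set (Fin n)), {Sum.inr false}))
    ∨ p = ({Sum.inr false}, Sum.inl '' (Set.univ : Set (Fin n)))
    ∨ (∃ i : Fin n, p = ({Sum.inl i}, {Sum.inr true}))}

/-! The vertices reachable from `i` in `H(F)` form the least vertex set closed under the hyperarcs.
A model `σ` of `F` yields such a closed set (its true variables, `t`, and not `f`); conversely a
closed set containing `t` but not `f` is read off as a model, while a closed set containing `f`
contains every variable. Hence `X_i ⇒ X_j` holds in all models iff `j` lies in every closed set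
containing `i`, i.e. iff `j` is reachable from `i`. -/

section Closure

variable {V : Type*}

def IsArcClosed (A : Set (Set V × Set V)) (S : Set V) : Prop :=
  ∀ p ∈ A, p.1 ⊆ S → p.2 ⊆ S

variable {A : Set (Set V × Set V)}

theorem HReach.mem_of_isArcClosed {S : Set V} (hS : IsArcClosed A S) {u v : V} (hu : u ∈ S)
    (h : HReach A u v) : v ∈ S := by
  induction h with
  | refl => exact hu
  | step T Hd ha hv _ ih => exact hS _ ha ih hv

theorem isArcClosed_setOf_hReach (A : Set (Set V × Set V)) (u : V) :
    IsArcClosed A {v | HReach A u v} :=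
  fun p hp hT _ hv => HReach.step p.1 p.2 hp hv hT

theorem hReach_iff_forall_isArcClosed {u v : V} :
    HReach A u v ↔ ∀ S, IsArcClosed A S → u ∈ S → v ∈ S :=
  ⟨fun h _ hS hu => h.mem_of_isArcClosed hS hu,
    fun h => h _ (isArcClosed_setOf_hReach A u) (HReach.refl u)⟩

end Closure

section Horn

variable {n : ℕ} {F : Set (HornClause n)} {S : Set (Fin n ⊕ Bool)}

theorem isArcClosed_hornArcs_iff :
    IsArcClosed (hornArcs F) S ↔
      (∀ T hT i, HornClause.imp T hT i ∈ F → (∀ k ∈ T, Sum.inl k ∈ S) → Sum.inl i ∈ S) ∧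
      (∀ i, HornClause.fact i ∈ F → Sum.inr true ∈ S → Sum.inl i ∈ S) ∧
      (∀ T hT, HornClause.goal T hT ∈ F → (∀ k ∈ T, Sum.inl k ∈ S) → Sum.inr false ∈ S) ∧
      (Sum.inr false ∈ S → ∀ k, Sum.inl k ∈ S) ∧
      (∀ k, Sum.inl k ∈ S → Sum.inr true ∈ S) := by
  constructor
  · intro hS
    refine ⟨fun T hT i hc hT' => ?_, fun i hc ht => ?_, fun T hT hc hT' => ?_,
      fun hf k => ?_, fun k hk => ?_⟩
    · exact hS _ (Or.inl ⟨T, hT, i, hc, rfl⟩) (Set.image_subset_iff.2 hT') rfl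
    · exact hS _ (Or.inr (Or.inl ⟨i, hc, rfl⟩)) (Set.singleton_subset_iff.2 ht) rfl
    · exact hS _ (Or.inr (Or.inr (Or.inl ⟨T, hT, hc, rfl⟩))) (Set.image_subset_iff.2 hT') rfl
    · exact hS _ (Or.inr (Or.inr (Or.inr (Or.inl rfl)))) (Set.singleton_subset_iff.2 hf)
        ⟨k, trivial, rfl⟩
    · exact hS _ (Or.inr (Or.inr (Or.inr (Or.inr ⟨k, rfl⟩)))) (Set.singleton_subset_iff.2 hk) rfl
  · rintro ⟨himp, hfact, hgoal, hfalse, htrue⟩ p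
      (⟨T, hT, i, hc, rfl⟩ | ⟨i, hc, rfl⟩ | ⟨T, hT, hc, rfl⟩ | rfl | ⟨k, rfl⟩) hsub
    · exact Set.singleton_subset_iff.2 (himp T hT i hc fun k hk => hsub ⟨k, hk, rfl⟩)
    · exact Set.singleton_subset_iff.2 (hfact i hc (hsub rfl))
    · exact Set.singleton_subset_iff.2 (hgoal T hT hc fun k hk => hsub ⟨k, hk, rfl⟩)
    · exact Set.image_subset_iff.2 fun k _ => hfalse (hsub rfl) k
    · exact Set.singleton_subset_iff.2 (htrue k (hsub rfl))

/-- The vertices of `H(F)` made true by `σ`, where `t` is true and `f` false. -/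
def modelVertices (σ : Fin n → Prop) : Set (Fin n ⊕ Bool) :=
  {v | Sum.elim σ (· = true) v}

theorem isArcClosed_modelVertices {σ : Fin n → Prop} (hσ : ∀ c ∈ F, HornClause.eval σ c) :
    IsArcClosed (hornArcs F) (modelVertices σ) := by
  refine isArcClosed_hornArcs_iff.2 ⟨fun T hT i hc hT' => ?_, fun i hc _ => ?_,
    fun T hT hc hT' => ?_, fun hf => ?_, fun _ _ => rfl⟩
  · exact hσ _ hc hT'
  · exact hσ _ hc
  · obtain ⟨k, hk, hnk⟩ := hσ _ hc
    exact absurd (hT' k hk) hnk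
  · exact absurd hf Bool.false_ne_true

theorem eval_of_isArcClosed (hS : IsArcClosed (hornArcs F) S) (ht : Sum.inr true ∈ S)
    (hf : Sum.inr false ∉ S) : ∀ c ∈ F, HornClause.eval (fun k => Sum.inl k ∈ S) c := by
  obtain ⟨himp, hfact, hgoal, -, -⟩ := isArcClosed_hornArcs_iff.1 hS
  rintro (⟨T, hT, i⟩ | i | ⟨T, hT⟩) hc
  · exact himp T hT i hc
  · exact hfact i hc ht
  · by_contra h
    exact hf (hgoal T hT hc fun k hk => by_contra fun hk' => h ⟨k, hk, hk'⟩)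

end Horn

theorem horn_entailment_iff_reach_general {n : ℕ} (F : Set (HornClause n))
    (i j : Fin n) :
    (∀ σ : Fin n → Prop, (∀ c ∈ F, HornClause.eval σ c) → (σ i → σ j)) ↔
      HReach (hornArcs F) (Sum.inl i) (Sum.inl j) := by
  rw [hReach_iff_forall_isArcClosed]
  constructor
  · intro hent S hS hi
    obtain ⟨-, -, -, hfalse, htrue⟩ := isArcClosed_hornArcs_iff.1 hS
    by_cases hf : Sum.inr false ∈ S
    · exact hfalse hf j
    · exact hent _ (eval_of_isArcClosed hS (htrue i hi) hf) hi
  · intro hreach σ hσ hi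
    exact hreach _ (isArcClosed_modelVertices hσ) hi

theorem horn_entailment_iff_reach {n : ℕ} (F : Set (HornClause n))
    (hocc : ∀ i : Fin n, ∃ c ∈ F, HornClause.occurs i c)
    (i j : Fin n) :
    (∀ σ : Fin n → Prop, (∀ c ∈ F, HornClause.eval σ c) → (σ i → σ j)) ↔
      HReach (hornArcs F) (Sum.inl i) (Sum.inl j) :=
  horn_entailment_iff_reach_general F i j
end

section
/- Let F be a family of distinct finite sets over a finite domain D, each of cardinality at least 2, and let H(F, D) be the associated directed hypergraph. For S ∈ F, a vertex v is reachable from v[S] in H(F, D) if and only if v = v[S'] for some S' ∈ F with S' ⊆ S, or v = v[x] for some x ∈ S. -/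
/-- The hypergraph `H(F, D)` associated to a family `F` of subsets of the
domain `α`: `Sum.inl x` is the vertex `v[x]` and `Sum.inr S` is the vertex
`v[S]`; each `S ∈ F` yields the hyperarcs `a[S]` and `a'[S]`. -/
def HFD {α : Type*} (F : Set (Set α)) : Set (Set (α ⊕ Set α) × Set (α ⊕ Set α)) :=
  {p | ∃ S ∈ F, p = ({Sum.inr S}, Sum.inl '' S) ∨ p = (Sum.inl '' S, {Sum.inr S})}

/-!
The vertices `v[S']` with `S' ⊆ S` together with the vertices `v[x]` with `x ∈ S` form a set
containing `v[S]` that is closed under every hyperarc: `a[S']` fires only from a `v[S']` already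
in the set, and `a'[S']` fires only once every `v[x]`, `x ∈ S'`, is, which forces `S' ⊆ S`.
Conversely `a[S]` reaches each `v[x]` with `x ∈ S`, after which `a'[S']` fires for every `S' ⊆ S`.
-/

namespace HReach

variable {V : Type*} {A : Set (Set V × Set V)}

theorem of_arc_singleton {u v : V} {Hd : Set V} (ha : ({u}, Hd) ∈ A) (hv : v ∈ Hd) :
    HReach A u v :=
  step {u} Hd ha hv fun _ ht => ht ▸ refl _

theorem mem_of_arcs_closed {P : Set V} (hP : ∀ p ∈ A, p.1 ⊆ P → p.2 ⊆ P) {u v : V}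
    (hu : u ∈ P) (h : HReach A u v) : v ∈ P := by
  induction h with
  | refl => exact hu
  | step T Hd ha hv _ ih => exact hP (T, Hd) ha ih hv

end HReach

section HFD

variable {α : Type*} {F : Set (Set α)} {S : Set α}

def belowVertices (F : Set (Set α)) (S : Set α) : Set (α ⊕ Set α) :=
  {v | (∃ S' ∈ F, S' ⊆ S ∧ v = Sum.inr S') ∨ (∃ x ∈ S, v = Sum.inl x)}

@[simp]
theorem inr_mem_belowVertices {S' : Set α} :
    Sum.inr S' ∈ belowVertices F S ↔ S' ∈ F ∧ S' ⊆ S := by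
  simp [belowVertices]

@[simp]
theorem inl_mem_belowVertices {x : α} : Sum.inl x ∈ belowVertices F S ↔ x ∈ S := by
  simp [belowVertices]

theorem belowVertices_arcs_closed :
    ∀ p ∈ HFD F, p.1 ⊆ belowVertices F S → p.2 ⊆ belowVertices F S := by
  rintro p ⟨S', hS', rfl | rfl⟩ hT
  · have hsub : S' ⊆ S := (inr_mem_belowVertices.mp (hT rfl)).2
    rintro _ ⟨x, hx, rfl⟩
    exact inl_mem_belowVertices.mpr (hsub hx)
  · rintro _ rfl
    refine inr_mem_belowVertices.mpr ⟨hS', fun x hx => ?_⟩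
    exact inl_mem_belowVertices.mp (hT ⟨x, hx, rfl⟩)

theorem hfd_reach_inl (hS : S ∈ F) {x : α} (hx : x ∈ S) :
    HReach (HFD F) (Sum.inr S) (Sum.inl x) :=
  HReach.of_arc_singleton ⟨S, hS, Or.inl rfl⟩ ⟨x, hx, rfl⟩

theorem hfd_reach_inr (hS : S ∈ F) {S' : Set α} (hS' : S' ∈ F) (hsub : S' ⊆ S) :
    HReach (HFD F) (Sum.inr S) (Sum.inr S') :=
  HReach.step _ _ ⟨S', hS', Or.inr rfl⟩ rfl <| by
    rintro _ ⟨x, hx, rfl⟩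
    exact hfd_reach_inl hS (hsub hx)

end HFD

theorem reach_from_vS_iff_general {α : Type*} (F : Set (Set α))
    (S : Set α) (hS : S ∈ F) (v : α ⊕ Set α) :
    HReach (HFD F) (Sum.inr S) v ↔
      (∃ S' ∈ F, S' ⊆ S ∧ v = Sum.inr S') ∨ (∃ x ∈ S, v = Sum.inl x) := by
  refine ⟨HReach.mem_of_arcs_closed belowVertices_arcs_closed
    (inr_mem_belowVertices.mpr ⟨hS, subset_rfl⟩), ?_⟩
  rintro (⟨S', hS', hsub, rfl⟩ | ⟨x, hx, rfl⟩)
  · exact hfd_reach_inr hS hS' hsub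
  · exact hfd_reach_inl hS hx

theorem reach_from_vS_iff {α : Type*} [Fintype α] (F : Set (Set α))
    (hcard : ∀ S ∈ F, 2 ≤ S.ncard)
    (S : Set α) (hS : S ∈ F) (v : α ⊕ Set α) :
    HReach (HFD F) (Sum.inr S) v ↔
      (∃ S' ∈ F, S' ⊆ S ∧ v = Sum.inr S') ∨ (∃ x ∈ S, v = Sum.inl x) :=
  reach_from_vS_iff_general F S hS v
end

section
/- Let F be a family of distinct finite sets over finite domain D, each of cardinality at least 2. In the hypergraph H(F, D), for S, S' ∈ F we have v[S] ⇝ v[S'] if and only if S' ⊆ S. In particular, the restriction of the reachability relation of H(F, D) to the vertices {v[S] : S ∈ F} is order-isomorphic to the reverse of the subset partial order on F. -/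
theorem reach_vS_vS'_iff_subset {α : Type*} [Fintype α] (F : Set (Set α))
    (hcard : ∀ S ∈ F, 2 ≤ S.ncard) :
    ∀ S ∈ F, ∀ S' ∈ F,
      (HReach (HFD F) (Sum.inr S) (Sum.inr S') ↔ S' ⊆ S) := by
  intro S hS S' hS'
  constructor
  · intro h
    have key : ∀ v, HReach (HFD F) (Sum.inr S) v →
        (∀ x, v = Sum.inl x → x ∈ S) ∧ (∀ T : Set α, v = Sum.inr T → T ⊆ S) := by
      intro v hv
      induction hv with
      | refl =>
        refine ⟨fun x hx => by simp at hx, fun T hT => ?_⟩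
        have : T = S := by injection hT.symm
        subst this; exact subset_rfl
      | step T Hd ha hv hT ih =>
        obtain ⟨S₀, hS₀, h1 | h1⟩ := ha
        · injection h1 with h1a h1b
          subst h1a h1b
          have hsub : S₀ ⊆ S :=
            (ih _ (Set.mem_singleton _)).2 S₀ rfl
          obtain ⟨x, hx, rfl⟩ := hv
          exact ⟨fun y hy => by injection hy with h; exact h ▸ hsub hx,
                 fun T hT => by simp at hT⟩
        · injection h1 with h1a h1b
          subst h1a h1b
          have hsub : S₀ ⊆ S := by
            intro x hx
            exact (ih _ ⟨x, hx, rfl⟩).1 x rfl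
          rw [Set.mem_singleton_iff] at hv
          subst hv
          exact ⟨fun y hy => by simp at hy,
                 fun T hT => by injection hT with h; exact h ▸ hsub⟩
    exact (key _ h).2 S' rfl
  · intro hsub
    have hx : ∀ x ∈ S, HReach (HFD F) (Sum.inr S) (Sum.inl x) := by
      intro x hxS
      exact HReach.step {Sum.inr S} (Sum.inl '' S) ⟨S, hS, Or.inl rfl⟩
        ⟨x, hxS, rfl⟩
        (fun t ht => by rw [Set.mem_singleton_iff] at ht; subst ht; exact .refl _)
    refine HReach.step (Sum.inl '' S') {Sum.inr S'} ⟨S', hS', Or.inr rfl⟩ rfl ?_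
    rintro t ⟨x, hxS', rfl⟩
    exact hx x (hsub hxS')
end

section
/- Let F be a family of distinct finite sets over a finite domain D, each of cardinality at least 2. If (S, S') is a covering pair of the subset partial order on F (i.e., S ⊊ S' and no S'' ∈ F satisfies S ⊊ S'' ⊊ S'), then (v[S'], v[S]) belongs to the transitive reduction of the reachability relation of H(F, D): v[S'] reaches v[S], and there is no vertex u distinct from v[S] and v[S'] with v[S'] ⇝ u ⇝ v[S]. -/
lemma reach_from_inl {α : Type*} (F : Set (Set α)) (hcard : ∀ S ∈ F, 2 ≤ S.ncard)
    (y : α) (v : α ⊕ Set α) (h : HReach (HFD F) (Sum.inl y) v) : v = Sum.inl y := by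
  induction h with
  | refl => rfl
  | step T Hd ha hv hT ih =>
    obtain ⟨W, hW, hcase | hcase⟩ := ha <;> rw [Prod.ext_iff] at hcase <;>
      obtain ⟨hT1, hHd⟩ := hcase <;> subst hT1 hHd
    · exact absurd (ih (Sum.inr W) rfl) (by simp)
    · have hsub : W ⊆ {y} := by
        intro x hx
        simpa using ih (Sum.inl x) ⟨x, hx, rfl⟩
      have h1 : W.ncard ≤ 1 :=
        le_trans (Set.ncard_le_ncard hsub (Set.finite_singleton y)) (by simp)
      have := hcard W hW
      omega

lemma reach_from_inr {α : Type*} (F : Set (Set α)) (hcard : ∀ S ∈ F, 2 ≤ S.ncard)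
    (W : Set α) (v : α ⊕ Set α) (h : HReach (HFD F) (Sum.inr W) v) :
    v = Sum.inr W ∨ (∃ x ∈ W, v = Sum.inl x) ∨ ∃ T ∈ F, T ⊆ W ∧ v = Sum.inr T := by
  induction h with
  | refl => left; rfl
  | step T Hd ha hv hT ih =>
    obtain ⟨U, hU, hcase | hcase⟩ := ha <;> rw [Prod.ext_iff] at hcase <;>
      obtain ⟨hT1, hHd⟩ := hcase <;> subst hT1 hHd
    · -- arc ({inr U}, inl '' U); v = inl x, x ∈ U; need U ⊆ W
      obtain ⟨x, hx, rfl⟩ := hv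
      have hUW : U ⊆ W := by
        rcases ih (Sum.inr U) rfl with hEq | ⟨_, _, hbad⟩ | ⟨T', _, hT'W, hEq⟩
        · exact (Sum.inr.injEq .. ▸ hEq : U = W) ▸ le_refl _
        · exact absurd hbad (by simp)
        · have : U = T' := by simpa using hEq
          exact this ▸ hT'W
      exact Or.inr (Or.inl ⟨x, hUW hx, rfl⟩)
    · -- arc (inl '' U, {inr U}); v = inr U; need U ⊆ W
      rw [Set.mem_singleton_iff] at hv
      have hUW : U ⊆ W := by
        intro x hx
        rcases ih (Sum.inl x) ⟨x, hx, rfl⟩ with hbad | ⟨x', hx', hEq'⟩ | ⟨T', _, _, hbad⟩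
        · exact absurd hbad (by simp)
        · have : x = x' := by simpa using hEq'
          exact this ▸ hx'
        · exact absurd hbad (by simp)
      exact Or.inr (Or.inr ⟨U, hU, hUW, hv⟩)

lemma reach_to_inl {α : Type*} (F : Set (Set α)) (W : Set α) (hW : W ∈ F)
    {x : α} (hx : x ∈ W) : HReach (HFD F) (Sum.inr W) (Sum.inl x) := by
  exact HReach.step {Sum.inr W} (Sum.inl '' W) ⟨W, hW, Or.inl rfl⟩ ⟨x, hx, rfl⟩
    (fun t ht => by rw [Set.mem_singleton_iff] at ht; exact ht ▸ HReach.refl _)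

lemma reach_to_inr {α : Type*} (F : Set (Set α)) (W T : Set α) (hW : W ∈ F)
    (hT : T ∈ F) (hsub : T ⊆ W) : HReach (HFD F) (Sum.inr W) (Sum.inr T) := by
  exact HReach.step (Sum.inl '' T) {Sum.inr T} ⟨T, hT, Or.inr rfl⟩ rfl
    (fun t ht => by obtain ⟨x, hx, rfl⟩ := ht; exact reach_to_inl F W hW (hsub hx))

theorem covering_pair_in_transitive_reduction {α : Type*} [Fintype α]
    (F : Set (Set α)) (hcard : ∀ S ∈ F, 2 ≤ S.ncard)
    (S S' : Set α) (hS : S ∈ F) (hS' : S' ∈ F)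
    (hss : S ⊂ S') (hcov : ¬ ∃ S'' ∈ F, S ⊂ S'' ∧ S'' ⊂ S') :
    HReach (HFD F) (Sum.inr S') (Sum.inr S) ∧
      ¬ ∃ u : α ⊕ Set α, u ≠ Sum.inr S ∧ u ≠ Sum.inr S' ∧
        HReach (HFD F) (Sum.inr S') u ∧ HReach (HFD F) u (Sum.inr S) := by
  constructor
  · exact reach_to_inr F S' S hS' hS hss.subset
  · rintro ⟨u, huS, huS', h1, h2⟩
    cases u with
    | inl y => exact absurd (reach_from_inl F hcard y _ h2) (by simp)
    | inr T =>
      have hTS' : T ⊆ S' ∧ T ∈ F := by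
        rcases reach_from_inr F hcard S' _ h1 with hEq | ⟨_, _, hbad⟩ | ⟨T', hT'F, hsub, hEq⟩
        · exact absurd hEq huS'
        · exact absurd hbad (by simp)
        · have hTT : T = T' := by simpa using hEq
          exact ⟨hTT ▸ hsub, hTT ▸ hT'F⟩
      have hST : S ⊆ T := by
        rcases reach_from_inr F hcard T _ h2 with hEq | ⟨_, _, hbad⟩ | ⟨T', hT'F, hsub, hEq⟩
        · exact absurd hEq.symm huS
        · exact absurd hbad (by simp)
        · have : S = T' := by simpa using hEq
          exact this ▸ hsub
      exact hcov ⟨T, hTS'.2, ⟨hST, fun h => huS (by rw [Set.Subset.antisymm hST h]) ⟩,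
        ⟨hTS'.1, fun h => huS' (by rw [Set.Subset.antisymm hTS'.1 h])⟩⟩
end

section
/- Let F be a family of distinct finite sets over a finite domain D, each of cardinality at least 2, and let H̄(F, D) be the extended hypergraph with counter vertices and a 'superset' vertex. Then for any S ∈ F, the set S is not minimal in F for inclusion if and only if the vertex 'superset' is reachable from v[S] in H̄(F, D). -/
/-- Vertices of the extended hypergraph `H̄(F, D)`. -/
inductive HVert (α : Type*) : Type _
  | vx : α → HVert α
  | vS : Set α → HVert α
  | wS : Set α → HVert α
  | c : ℕ → HVert α
  | sup : HVert α

/-- Hyperarcs of the extended hypergraph `H̄(F, D)`. -/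
def HbarFD {α : Type*} [Fintype α] (F : Set (Set α)) :
    Set (Set (HVert α) × Set (HVert α)) :=
  {p | (∃ S ∈ F, p = ({HVert.vS S}, HVert.vx '' S))
    ∨ (∃ S ∈ F, p = (HVert.vx '' S, {HVert.vS S}))
    ∨ (∃ S ∈ F, p = ({HVert.vS S}, {HVert.c (S.ncard - 1)}))
    ∨ (∃ i : ℕ, i ≤ Fintype.card α ∧ (∃ S ∈ F, S.ncard = i) ∧
        p = ({HVert.c i}, {v | ∃ S ∈ F, S.ncard = i ∧ v = HVert.wS S}))
    ∨ (∃ i : ℕ, 0 < i ∧ i ≤ Fintype.card α ∧ p = ({HVert.c i}, {HVert.c (i - 1)}))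
    ∨ (∃ S ∈ F, p = ({HVert.vS S, HVert.wS S}, ({HVert.sup} : Set (HVert α))))
    ∨ (∃ S ∈ F, p = (({HVert.sup} : Set (HVert α)), {HVert.vS S}))}


/-!
If `S' ⊊ S` in `F`, then `v[S]` reaches every `v[x]` with `x ∈ S`, hence `v[S']`; the counter
chain `c_{|S|-1} → ⋯ → c_{|S'|}` reaches `w[S']`, and the hyperarc `{v[S'], w[S']} → superset`
fires. Conversely, when `S` is minimal, the vertices `v[x]` with `x ∈ S`, `v[T]` with `T ⊆ S`,
`c_i` with `i < |S|` and `w[T]` with `|T| < |S|` form a set closed under the hyperarcs: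
the only way out is the arc into `superset`, which needs some `T ⊆ S` with `|T| < |S|`.
-/

namespace HReach

variable {V : Type*} {A : Set (Set V × Set V)} {u v w : V}

theorem trans_gReach (huv : HReach A u v) (hvw : GReach A v w) : HReach A u w := by
  induction hvw with
  | refl => exact huv
  | tail _ harc ih =>
    obtain ⟨Hd, ha, hw⟩ := harc
    exact step _ Hd ha hw fun t ht => (Set.mem_singleton_iff.1 ht) ▸ ih

theorem of_gReach (h : GReach A u v) : HReach A u v :=
  (refl u).trans_gReach h

theorem induction_of_closed {P : V → Prop} (h : HReach A u v) (hu : P u)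
    (hP : ∀ T Hd, (T, Hd) ∈ A → (∀ t ∈ T, P t) → ∀ x ∈ Hd, P x) : P v := by
  induction h with
  | refl => exact hu
  | step T Hd ha hv _ ih => exact hP T Hd ha ih _ hv

end HReach

section Hbar

open HVert

variable {α : Type*} [Fintype α] {F : Set (Set α)}

theorem Set.ncard_le_fintypeCard (S : Set α) : S.ncard ≤ Fintype.card α :=
  Nat.card_eq_fintype_card (α := α) ▸ Set.ncard_le_card S

theorem gReach_c_of_le {i j : ℕ} (hji : j ≤ i) (hi : i ≤ Fintype.card α) :
    GReach (HbarFD F) (c i) (c j) := by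
  induction i with
  | zero => obtain rfl := Nat.le_zero.1 hji; exact .refl
  | succ i ih =>
    rcases Nat.of_le_succ hji with hji | rfl
    · have harc : (c (i + 1), c i) ∈ graphArcs (HbarFD F) :=
        ⟨{c i}, Or.inr <| Or.inr <| Or.inr <| Or.inr <| Or.inl ⟨i + 1, i.succ_pos, hi, rfl⟩, rfl⟩
      exact .head harc (ih hji (by omega))
    · exact .refl

theorem gReach_vS_wS {S T : Set α} (hS : S ∈ F) (hT : T ∈ F) (hlt : T.ncard < S.ncard) :
    GReach (HbarFD F) (vS S) (wS T) := by
  have hS_count : (vS S, c (S.ncard - 1)) ∈ graphArcs (HbarFD F) :=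
    ⟨_, Or.inr <| Or.inr <| Or.inl ⟨S, hS, rfl⟩, rfl⟩
  have hT_count : (c T.ncard, wS T) ∈ graphArcs (HbarFD F) :=
    ⟨_, Or.inr <| Or.inr <| Or.inr <| Or.inl
      ⟨_, T.ncard_le_fintypeCard, ⟨T, hT, rfl⟩, rfl⟩, ⟨T, hT, rfl, rfl⟩⟩
  have hcount : GReach (HbarFD F) (c (S.ncard - 1)) (c T.ncard) :=
    gReach_c_of_le (by omega) ((Nat.sub_le _ _).trans S.ncard_le_fintypeCard)
  exact .head hS_count (hcount.tail hT_count)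

theorem hReach_vS_of_subset {S T : Set α} (hS : S ∈ F) (hT : T ∈ F) (hTS : T ⊆ S) :
    HReach (HbarFD F) (vS S) (vS T) := by
  have helem : ∀ x ∈ S, HReach (HbarFD F) (vS S) (vx x) := fun x hx =>
    .of_gReach <| .single ⟨_, Or.inl ⟨S, hS, rfl⟩, x, hx, rfl⟩
  refine .step _ _ (Or.inr <| Or.inl ⟨T, hT, rfl⟩) rfl ?_
  rintro _ ⟨x, hx, rfl⟩
  exact helem x (hTS hx)

theorem hReach_sup_of_ssubset {S T : Set α} (hS : S ∈ F) (hT : T ∈ F) (hTS : T ⊂ S) :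
    HReach (HbarFD F) (vS S) sup := by
  refine .step _ _ (Or.inr <| Or.inr <| Or.inr <| Or.inr <| Or.inr <| Or.inl ⟨T, hT, rfl⟩) rfl ?_
  rintro _ (rfl | rfl)
  · exact hReach_vS_of_subset hS hT hTS.subset
  · exact .of_gReach (gReach_vS_wS hS hT (Set.ncard_lt_ncard hTS))

/-- Contains every vertex reachable from `v[S]` when `S` is minimal in `F`. -/
def HVert.Below (S : Set α) : HVert α → Prop
  | vx x => x ∈ S
  | vS T => T ⊆ S
  | wS T => T.ncard < S.ncard
  | c i => i < S.ncard
  | sup => False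

theorem below_closed {S : Set α} (hne : S.Nonempty) (hmin : ∀ T ∈ F, ¬T ⊂ S) :
    ∀ T Hd, (T, Hd) ∈ HbarFD F → (∀ t ∈ T, HVert.Below S t) → ∀ v ∈ Hd, HVert.Below S v := by
  -- `|T| - 1` truncates to `0` at `T = ∅`, so the arc `v[T] → c_{|T|-1}` needs `S ≠ ∅`.
  have hpos : 0 < S.ncard := (Set.ncard_pos).2 hne
  rintro _ _ (⟨T, -, he⟩ | ⟨T, -, he⟩ | ⟨T, -, he⟩ | ⟨i, -, -, he⟩ | ⟨i, -, -, he⟩ |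
      ⟨T, hT, he⟩ | ⟨T, -, he⟩) htail v hv <;>
    obtain ⟨rfl, rfl⟩ := Prod.mk.inj he
  · obtain ⟨x, hx, rfl⟩ := hv
    exact (htail (vS T) rfl) hx
  · obtain rfl := hv
    exact fun x hx => htail (vx x) ⟨x, hx, rfl⟩
  · obtain rfl := hv
    have : T.ncard ≤ S.ncard := Set.ncard_le_ncard (htail (vS T) rfl)
    show T.ncard - 1 < S.ncard
    omega
  · obtain ⟨T, -, rfl, rfl⟩ := hv
    exact htail (c T.ncard) rfl
  · obtain rfl := hv
    have : i < S.ncard := htail (c i) rfl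
    show i - 1 < S.ncard
    omega
  · have hTS : T ⊆ S := htail (vS T) (Or.inl rfl)
    have hlt : T.ncard < S.ncard := htail (wS T) (Or.inr rfl)
    exact (hmin T hT (hTS.ssubset_of_ne (by rintro rfl; omega))).elim
  · exact (htail sup rfl).elim

end Hbar

theorem not_minimal_iff_reach_superset {α : Type*} [Fintype α]
    (F : Set (Set α)) (hcard : ∀ S ∈ F, 2 ≤ S.ncard)
    (S : Set α) (hS : S ∈ F) :
    (∃ S' ∈ F, S' ⊂ S) ↔ HReach (HbarFD F) (HVert.vS S) HVert.sup := by
  refine ⟨fun ⟨S', hS', hlt⟩ => hReach_sup_of_ssubset hS hS' hlt, fun h => ?_⟩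
  by_contra! hmin
  have hne : S.Nonempty := (Set.ncard_pos).1 (by linarith [hcard S hS])
  exact h.induction_of_closed (P := HVert.Below S) subset_rfl (below_closed hne hmin)
end

section
/- Let F be a family of distinct finite subsets of a finite domain D, each of cardinality at least 2. Then the hypergraph H(F, D) is acyclic: its only strongly connected components are singletons, i.e., if u ⇝ v and v ⇝ u in H(F, D) then u = v. -/
lemma reach_inl_aux {α : Type*} (F : Set (Set α)) (hcard : ∀ S ∈ F, 2 ≤ S.ncard)
    (x : α) : ∀ v, HReach (HFD F) (Sum.inl x) v → v = Sum.inl x := by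
  intro v h
  induction h with
  | refl => rfl
  | step T Hd ha hv hT ih =>
    obtain ⟨S, hS, h | h⟩ := ha
    · rw [Prod.ext_iff] at h
      obtain ⟨h1, h2⟩ := h
      simp only at h1 h2
      subst h1; subst h2
      have := ih (Sum.inr S) (by simp)
      simp at this
    · rw [Prod.ext_iff] at h
      obtain ⟨h1, h2⟩ := h
      simp only at h1 h2
      subst h1; subst h2
      have hsub : S ⊆ {x} := by
        intro y hy
        have := ih (Sum.inl y) ⟨y, hy, rfl⟩
        simpa using this
      have h2 := hcard S hS
      have h1 := Set.ncard_le_ncard hsub (Set.finite_singleton x)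
      simp [Set.ncard_singleton] at h1
      omega

lemma reach_inr_aux {α : Type*} (F : Set (Set α)) (S : Set α) :
    ∀ v, HReach (HFD F) (Sum.inr S) v →
      (∀ y, v = Sum.inl y → y ∈ S) ∧ (∀ S', v = Sum.inr S' → S' ⊆ S) := by
  intro v h
  induction h with
  | refl =>
    refine ⟨fun y hy => by simp at hy, fun S' hS' => ?_⟩
    simp only [Sum.inr.injEq] at hS'
    subst hS'; exact fun _ h => h
  | step T Hd ha hv hT ih =>
    obtain ⟨S'', hS'', h | h⟩ := ha
    · rw [Prod.ext_iff] at h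
      obtain ⟨h1, h2⟩ := h
      simp only at h1 h2
      subst h1; subst h2
      obtain ⟨y, hy, rfl⟩ := hv
      have hsub : S'' ⊆ S := (ih (Sum.inr S'') (by simp)).2 S'' rfl
      exact ⟨fun z hz => by simp only [Sum.inl.injEq] at hz; exact hsub (hz ▸ hy),
             fun S' hS' => by simp at hS'⟩
    · rw [Prod.ext_iff] at h
      obtain ⟨h1, h2⟩ := h
      simp only at h1 h2
      subst h1; subst h2
      simp only [Set.mem_singleton_iff] at hv
      subst hv
      refine ⟨fun y hy => by simp at hy, fun S' hS' => ?_⟩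
      simp only [Sum.inr.injEq] at hS'
      subst hS'
      intro y hy
      exact (ih (Sum.inl y) ⟨y, hy, rfl⟩).1 y rfl

theorem HFD_acyclic {α : Type*} [Fintype α] (F : Set (Set α))
    (hcard : ∀ S ∈ F, 2 ≤ S.ncard) :
    ∀ u v : α ⊕ Set α, HReach (HFD F) u v → HReach (HFD F) v u → u = v := by
  intro u v huv hvu
  match u, v with
  | Sum.inl x, _ => exact (reach_inl_aux F hcard x _ huv).symm
  | _, Sum.inl y => exact reach_inl_aux F hcard y _ hvu
  | Sum.inr S, Sum.inr S' =>
    have h1 := (reach_inr_aux F S _ huv).2 S' rfl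
    have h2 := (reach_inr_aux F S' _ hvu).2 S rfl
    exact congrArg Sum.inr (h2.antisymm h1)
end

section
/- For n divisible by 4, consider the family F over D = {x_1, ..., x_n} consisting of F₁ (all subsets of {x_1, ..., x_{n/2}} of cardinality n/4) and F₂ (all sets containing {x_1, ..., x_{n/2}} together with exactly n/4 elements of {x_{n/2+1}, ..., x_n}). Then the covering relation (transitive reduction) of the subset partial order on F = F₁ ∪ F₂ is exactly the cartesian product F₁ × F₂; in particular its size is C(n/2, n/4)². -/
/-- The lower half `{x_1, ..., x_{n/2}}` of the domain `Fin n`. -/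
def loHalf (n : ℕ) : Set (Fin n) := {x | (x : ℕ) < n / 2}

/-- `F₁`: subsets of the lower half of cardinality `n/4`. -/
def fam1 (n : ℕ) : Set (Set (Fin n)) := {S | S ⊆ loHalf n ∧ S.ncard = n / 4}

/-- `F₂`: sets containing the lower half together with exactly `n/4` further
elements (of the upper half). -/
def fam2 (n : ℕ) : Set (Set (Fin n)) :=
  {S | loHalf n ⊆ S ∧ (S \ loHalf n).ncard = n / 4}

/-- `(S, S')` is a covering pair of the subset partial order on `F`. -/
def IsCoveringPair {β : Type*} (F : Set (Set β)) (S S' : Set β) : Prop :=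
  S ∈ F ∧ S' ∈ F ∧ S ⊂ S' ∧ ¬ ∃ S'' ∈ F, S ⊂ S'' ∧ S'' ⊂ S'

lemma ncard_prod' {α : Type*} (s t : Set α) : (s ×ˢ t).ncard = s.ncard * t.ncard := by
  rw [← Nat.card_coe_set_eq, ← Nat.card_coe_set_eq, ← Nat.card_coe_set_eq,
    Nat.card_congr (Equiv.Set.prod s t), Nat.card_prod]

lemma loHalf_eq (n : ℕ) :
    loHalf n = ↑(Finset.univ.filter (fun x : Fin n => (x : ℕ) < n / 2)) := by
  ext x; simp [loHalf]

lemma ncard_loHalf (n : ℕ) : (loHalf n).ncard = n / 2 := by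
  have h2 : n / 2 ≤ n := Nat.div_le_self n 2
  have : loHalf n = Fin.castLE h2 '' Set.univ := by
    ext x
    simp only [Set.image_univ, Set.mem_range, loHalf, Set.mem_setOf_eq]
    constructor
    · intro hx; exact ⟨⟨x, hx⟩, by ext; simp⟩
    · rintro ⟨y, rfl⟩; exact y.isLt
  rw [this, Set.ncard_image_of_injective _ (Fin.castLE_injective h2), Set.ncard_univ,
    Nat.card_eq_fintype_card, Fintype.card_fin]

-- fam2 "rigidity": two fam2 sets comparable ⇒ equal
lemma fam2_rigid {n : ℕ} {S S' : Set (Fin n)} (hS : S ∈ fam2 n) (hS' : S' ∈ fam2 n)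
    (h : S ⊆ S') : S = S' := by
  obtain ⟨h1, h2⟩ := hS
  obtain ⟨h1', h2'⟩ := hS'
  have hd : S \ loHalf n = S' \ loHalf n :=
    Set.eq_of_subset_of_ncard_le (Set.diff_subset_diff_left h) (by rw [h2, h2'])
  calc S = loHalf n ∪ (S \ loHalf n) := (Set.union_diff_cancel h1).symm
    _ = loHalf n ∪ (S' \ loHalf n) := by rw [hd]
    _ = S' := Set.union_diff_cancel h1'

lemma fam1_rigid {n : ℕ} {S S' : Set (Fin n)} (hS : S ∈ fam1 n) (hS' : S' ∈ fam1 n)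
    (h : S ⊆ S') : S = S' :=
  Set.eq_of_subset_of_ncard_le h (by rw [hS.2, hS'.2])

theorem covering_pairs_of_elmasry_family (n : ℕ) (hn4 : 4 ∣ n) (hn : 8 ≤ n) :
    (∀ S S' : Set (Fin n),
      IsCoveringPair (fam1 n ∪ fam2 n) S S' ↔ (S ∈ fam1 n ∧ S' ∈ fam2 n)) ∧
    {p : Set (Fin n) × Set (Fin n) |
        IsCoveringPair (fam1 n ∪ fam2 n) p.1 p.2}.ncard =
      (Nat.choose (n / 2) (n / 4)) ^ 2 := by
  obtain ⟨k, rfl⟩ := hn4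
  have hk : 2 ≤ k := by omega
  have h2 : 4 * k / 2 = 2 * k := by omega
  have h4 : 4 * k / 4 = k := by omega
  have hL := ncard_loHalf (4 * k)
  rw [h2] at hL
  -- main characterization
  have main : ∀ S S' : Set (Fin (4 * k)),
      IsCoveringPair (fam1 (4 * k) ∪ fam2 (4 * k)) S S' ↔
        (S ∈ fam1 (4 * k) ∧ S' ∈ fam2 (4 * k)) := by
    intro S S'
    constructor
    · rintro ⟨hS, hS', hss, -⟩
      rcases hS with hS | hS
      · rcases hS' with hS' | hS'
        · exact absurd (fam1_rigid hS hS' hss.subset) hss.ne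
        · exact ⟨hS, hS'⟩
      · rcases hS' with hS' | hS'
        · exact absurd (hS'.1.trans hS.1) hss.not_subset
        · exact absurd (fam2_rigid hS hS' hss.subset) hss.ne
    · rintro ⟨hS, hS'⟩
      have hsub : S ⊂ S' := by
        refine ⟨hS.1.trans hS'.1, fun h => ?_⟩
        have heq : loHalf (4 * k) = S := subset_antisymm (hS'.1.trans h) hS.1
        obtain ⟨-, hc⟩ := hS
        rw [← heq, hL] at hc
        omega
      refine ⟨Or.inl hS, Or.inr hS', hsub, ?_⟩
      rintro ⟨S'', hS'' | hS'', h1, h2⟩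
      · exact h1.ne (fam1_rigid hS hS'' h1.subset)
      · exact h2.ne (fam2_rigid hS'' hS' h2.subset)
  refine ⟨main, ?_⟩
  have hset : {p : Set (Fin (4 * k)) × Set (Fin (4 * k)) |
      IsCoveringPair (fam1 (4 * k) ∪ fam2 (4 * k)) p.1 p.2} =
      fam1 (4 * k) ×ˢ fam2 (4 * k) := by
    ext ⟨S, S'⟩
    simpa using main S S'
  rw [hset, ncard_prod', sq]
  -- count fam1
  classical
  set Lfin : Finset (Fin (4 * k)) := Finset.univ.filter (fun x => (x : ℕ) < 4 * k / 2) with hLfin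
  have hLcoe : (↑Lfin : Set (Fin (4 * k))) = loHalf (4 * k) := (loHalf_eq (4 * k)).symm
  have hLcard : Lfin.card = 2 * k := by
    have := Set.ncard_coe_finset Lfin
    rw [hLcoe, hL] at this; omega
  set Ufin : Finset (Fin (4 * k)) := Finset.univ.filter (fun x => ¬ (x : ℕ) < 4 * k / 2)
    with hUfin
  have hUcoe : (↑Ufin : Set (Fin (4 * k))) = (loHalf (4 * k))ᶜ := by
    ext x; simp [Ufin, loHalf]
  have hUcard : Ufin.card = 2 * k := by
    have h := Finset.card_filter_add_card_filter_not
      (s := (Finset.univ : Finset (Fin (4 * k)))) (p := fun x => (x : ℕ) < 4 * k / 2)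
    rw [← hLfin, ← hUfin] at h
    simp only [Finset.card_univ, Fintype.card_fin] at h
    omega
  have hfam1 : fam1 (4 * k) =
      (fun t : Finset (Fin (4 * k)) => (↑t : Set (Fin (4 * k)))) ''
        ↑(Lfin.powersetCard k) := by
    ext S
    constructor
    · rintro ⟨hsub, hcard⟩
      have hfin : S.Finite := S.toFinite
      refine ⟨hfin.toFinset, ?_, hfin.coe_toFinset⟩
      rw [Finset.mem_coe, Finset.mem_powersetCard]
      constructor
      · intro x hx
        rw [Set.Finite.mem_toFinset] at hx
        rw [← Finset.mem_coe, hLcoe]; exact hsub hx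
      · rw [← Set.ncard_eq_toFinset_card S hfin, hcard]; exact h4
    · rintro ⟨t, ht, rfl⟩
      rw [Finset.mem_coe, Finset.mem_powersetCard] at ht
      refine ⟨?_, by rw [Set.ncard_coe_finset, ht.2]; omega⟩
      rw [← hLcoe]; exact_mod_cast ht.1
  have hfam2 : fam2 (4 * k) =
      (fun t : Finset (Fin (4 * k)) => loHalf (4 * k) ∪ (↑t : Set (Fin (4 * k)))) ''
        ↑(Ufin.powersetCard k) := by
    ext S
    constructor
    · rintro ⟨hsub, hcard⟩
      have hfin : (S \ loHalf (4 * k)).Finite := Set.toFinite _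
      refine ⟨hfin.toFinset, ?_, ?_⟩
      · rw [Finset.mem_coe, Finset.mem_powersetCard]
        constructor
        · intro x hx
          rw [Set.Finite.mem_toFinset] at hx
          rw [← Finset.mem_coe, hUcoe]
          exact hx.2
        · rw [← Set.ncard_eq_toFinset_card _ hfin, hcard]; exact h4
      · simp only [Set.Finite.coe_toFinset]
        exact Set.union_diff_cancel hsub
    · rintro ⟨t, ht, rfl⟩
      rw [Finset.mem_coe, Finset.mem_powersetCard] at ht
      have hdis : Disjoint (loHalf (4 * k)) (↑t : Set (Fin (4 * k))) := by
        rw [Set.disjoint_left]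
        intro x hx hxt
        have hxU : x ∈ Ufin := ht.1 hxt
        rw [hUfin, Finset.mem_filter] at hxU
        exact hxU.2 hx
      refine ⟨Set.subset_union_left, ?_⟩
      rw [Set.union_diff_cancel_left (Set.disjoint_iff.mp hdis), Set.ncard_coe_finset, ht.2]
      omega
  rw [hfam1, hfam2, h2, h4,
    Set.ncard_image_of_injective _ Finset.coe_injective, Set.ncard_coe_finset,
    Finset.card_powersetCard, hLcard]
  congr 1
  have hinj : Set.InjOn (fun t : Finset (Fin (4 * k)) => loHalf (4 * k) ∪ (↑t : Set (Fin (4 * k))))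
      ↑(Ufin.powersetCard k) := by
    intro t ht t' ht' heq
    rw [Finset.mem_coe, Finset.mem_powersetCard] at ht ht'
    have key : ∀ s : Finset (Fin (4 * k)), s ⊆ Ufin →
        (loHalf (4 * k) ∪ (↑s : Set (Fin (4 * k)))) \ loHalf (4 * k) = ↑s := by
      intro s hs
      have hdis : (↑s : Set (Fin (4 * k))) ⊆ (loHalf (4 * k))ᶜ := by
        rw [← hUcoe]; exact_mod_cast hs
      rw [Set.union_diff_cancel_left]
      intro x hx
      exact (hdis hx.2) hx.1
    have hcc : (↑t : Set (Fin (4 * k))) = ↑t' := by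
      rw [← key t ht.1, ← key t' ht'.1]
      exact congrArg (· \ loHalf (4 * k)) heq
    exact Finset.coe_injective hcc
  rw [Set.ncard_image_of_injOn hinj, Set.ncard_coe_finset, Finset.card_powersetCard,
    hUcard]
end
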